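/- Let A be a local ring with p in its maximal ideal, such that both A and W_n(A) are noetherian. If A is Cohen–Macaulay, then W_n(A) is Cohen–Macaulay. -/

import Mathlib

/-- A (noetherian local) commutative ring is Cohen–Macaulay iff it admits a regular sequence,
consisting of nonunits (i.e. elements of the maximal ideal in the local case), whose length
equals its Krull dimension, that is, iff its depth equals its dimension. -/
def IsCohenMacaulayLocalRing (A : Type) [CommRing A] : Prop :=
  ∃ rs : List A, (∀ a ∈ rs, a ∈ nonunits A) ∧ RingTheory.Sequence.IsRegular A rs ∧
    (rs.length : WithBot (WithTop ℕ)) = ringKrullDim A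

/-!
The Teichmüller lifts `[a₁], …, [a_d]` of a regular sequence of nonunits of `A` of length `dim A`
form such a sequence in `W_{n+1}(A)`.

Regularity: the kernel of `W_{n+1}(A) → Wₙ(A)` is `Vⁿ W(A)`, which is `A` with `[a]` acting as
`a ^ pⁿ`. Powers of a weakly regular sequence are weakly regular, and weak regularity passes to the
middle of a short exact sequence, so induction on `n` works. The zeroth ghost component sends `[a]`
to `a`, so the `[aᵢ]` are nonunits and do not generate the unit ideal.

Dimension: each ghost component `wᵢ : W_{n+1}(A) → A` is integral, as `a ^ pⁱ = wᵢ [a]`, and every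
prime `P` contains some `ker wᵢ`: if `p ∈ P` then `ker w₀ ⊆ P`, since `x² ∈ p W` when `x₀ = 0`;
otherwise `P` contains `⋂ ker wᵢ`, which is killed by `pⁿ`. Going up along `wᵢ` lifts chains of
primes, so `dim W_{n+1}(A) ≤ dim A`; the reverse inequality holds because `w₀` is surjective.
-/

open Function RingTheory.Sequence WittVector

namespace RingTheory.Sequence

variable {R : Type*} [CommRing R]

lemma isWeaklyRegular_of_subsingleton (M : Type*) [AddCommGroup M] [Module R M] [Subsingleton M]
    (rs : List R) : IsWeaklyRegular M rs :=
  ⟨fun _ _ _ _ _ => Subsingleton.elim _ _⟩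

lemma isWeaklyRegular_of_exact (rs : List R) {K M N : Type*} [AddCommGroup K] [AddCommGroup M]
    [AddCommGroup N] [Module R K] [Module R M] [Module R N] {g : K →ₗ[R] M} {f : M →ₗ[R] N}
    (hg : Injective g) (hf : Surjective f) (hgf : Exact g f)
    (hK : IsWeaklyRegular K rs) (hN : IsWeaklyRegular N rs) : IsWeaklyRegular M rs := by
  induction rs generalizing K M N with
  | nil => exact .nil R M
  | cons r rs ih =>
    rw [isWeaklyRegular_cons_iff] at hK hN ⊢
    refine ⟨isSMulRegular_of_range_eq_ker hg hgf.linearMap_ker_eq.symm hK.1 hN.1, ?_⟩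
    -- `0 → K → M → N` stays exact modulo `r` because `r` is regular on `N`
    have hg' : Injective (QuotSMulTop.map r g) := by
      have := QuotSMulTop.map_first_exact_on_four_term_exact_of_isSMulRegular_last
        ((LinearMap.exact_zero_iff_injective PUnit g).mpr hg) hgf hN.1
      rwa [map_zero, LinearMap.exact_zero_iff_injective] at this
    exact ih hg' (QuotSMulTop.map_surjective r hf) (QuotSMulTop.map_exact r hgf hf) hK.2 hN.2

section Pow

open Submodule Pointwise

variable {M : Type*} [AddCommGroup M] [Module R M]

lemma exists_exact_quotSMulTop_pow_succ {a : R} (ha : IsSMulRegular M a) (e : ℕ) :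
    ∃ (g : QuotSMulTop (a ^ e) M →ₗ[R] QuotSMulTop (a ^ (e + 1)) M)
      (f : QuotSMulTop (a ^ (e + 1)) M →ₗ[R] QuotSMulTop a M),
      Injective g ∧ Surjective f ∧ Exact g f := by
  have mem_iff (b : R) (x : M) : x ∈ b • (⊤ : Submodule R M) ↔ ∃ y, b • y = x := by
    simp [mem_smul_pointwise_iff_exists]
  let g : QuotSMulTop (a ^ e) M →ₗ[R] QuotSMulTop (a ^ (e + 1)) M :=
    mapQ _ _ (a • LinearMap.id) fun x hx => by
      obtain ⟨y, rfl⟩ := (mem_iff _ x).mp hx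
      exact (mem_iff _ _).mpr ⟨y, by simp [pow_succ', mul_smul, smul_comm a]⟩
  let f : QuotSMulTop (a ^ (e + 1)) M →ₗ[R] QuotSMulTop a M :=
    factor fun x hx => by
      obtain ⟨y, rfl⟩ := (mem_iff _ x).mp hx
      exact (mem_iff _ _).mpr ⟨a ^ e • y, by rw [← mul_smul, ← pow_succ']⟩
  refine ⟨g, f, (injective_iff_map_eq_zero g).mpr fun q hq => ?_, factor_surjective _, fun q => ?_⟩
  · obtain ⟨x, rfl⟩ := Submodule.Quotient.mk_surjective _ q
    obtain ⟨y, hy⟩ := (mem_iff _ _).mp ((Submodule.Quotient.mk_eq_zero _).mp hq)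
    rw [pow_succ', mul_smul] at hy
    exact (Submodule.Quotient.mk_eq_zero _).mpr ((mem_iff _ _).mpr ⟨y, ha hy⟩)
  · obtain ⟨x, rfl⟩ := Submodule.Quotient.mk_surjective _ q
    refine ⟨fun hx => ?_, ?_⟩
    · obtain ⟨y, rfl⟩ := (mem_iff _ _).mp ((Submodule.Quotient.mk_eq_zero _).mp hx)
      exact ⟨Submodule.Quotient.mk y, rfl⟩
    · rintro ⟨q', hq'⟩
      obtain ⟨y, rfl⟩ := Submodule.Quotient.mk_surjective _ q'
      obtain ⟨z, hz⟩ := (mem_iff _ _).mp ((Submodule.Quotient.eq _).mp hq'.symm)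
      refine (Submodule.Quotient.mk_eq_zero _).mpr ((mem_iff _ _).mpr ⟨y + a ^ e • z, ?_⟩)
      rw [smul_add, ← mul_smul, ← pow_succ', hz]
      simp

lemma isWeaklyRegular_quotSMulTop_pow {a : R} (ha : IsSMulRegular M a) {rs : List R}
    (h : IsWeaklyRegular (QuotSMulTop a M) rs) (e : ℕ) :
    IsWeaklyRegular (QuotSMulTop (a ^ e) M) rs := by
  induction e with
  | zero =>
    have : Subsingleton (QuotSMulTop (a ^ 0) M) := by
      rw [pow_zero]
      exact Submodule.Quotient.subsingleton_iff.mpr (one_smul R _)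
    exact isWeaklyRegular_of_subsingleton _ rs
  | succ e ih =>
    obtain ⟨g, f, hg, hf, hgf⟩ := exists_exact_quotSMulTop_pow_succ ha e
    exact isWeaklyRegular_of_exact rs hg hf hgf ih h

lemma IsWeaklyRegular.map_pow {rs : List R} (h : IsWeaklyRegular M rs) (e : ℕ) :
    IsWeaklyRegular M (rs.map (· ^ e)) := by
  induction rs generalizing M with
  | nil => exact .nil R M
  | cons a rs ih =>
    rw [isWeaklyRegular_cons_iff] at h
    exact .cons (h.1.pow e) (isWeaklyRegular_quotSMulTop_pow h.1 (ih h.2) e)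

end Pow

lemma IsWeaklyRegular.isRegular_of_isRegular_map {S : Type*} [CommRing S] {rs : List R}
    (h : IsWeaklyRegular R rs) (f : R →+* S) (hS : IsRegular S (rs.map f)) : IsRegular R rs := by
  refine ⟨h, fun htop => hS.top_ne_smul ?_⟩
  rw [smul_eq_mul, Ideal.mul_top] at htop ⊢
  rw [← Ideal.map_ofList, ← htop, Ideal.map_top]

end RingTheory.Sequence

lemma LTSeries.length_le_ringKrullDim_of_isIntegral {R S : Type*} [CommRing R] [CommRing S]
    [Algebra R S] [Algebra.IsIntegral R S] (ℓ : LTSeries (PrimeSpectrum R))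
    (h : RingHom.ker (algebraMap R S) ≤ ℓ.head.asIdeal) :
    (ℓ.length : WithBot ℕ∞) ≤ ringKrullDim S := by
  obtain ⟨P, -, hP, hPℓ⟩ :=
    Ideal.exists_ideal_over_prime_of_isIntegral ℓ.head.asIdeal (⊥ : Ideal S)
      (by rwa [← RingHom.ker_eq_comap_bot])
  have : P.LiesOver ℓ.head.asIdeal := ⟨hPℓ.symm⟩
  obtain ⟨L, hL, -⟩ := Ideal.exists_ltSeries_of_hasGoingUp ℓ P
  exact hL ▸ Order.LTSeries.length_le_krullDim L

lemma ringKrullDim_le_of_forall_ker_le {R S ι : Type*} [CommRing R] [CommRing S]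
    (f : ι → R →+* S) (hf : ∀ i, (f i).IsIntegral)
    (hker : ∀ P : Ideal R, P.IsPrime → ∃ i, RingHom.ker (f i) ≤ P) :
    ringKrullDim R ≤ ringKrullDim S := by
  refine iSup_le fun ℓ => ?_
  obtain ⟨i, hi⟩ := hker ℓ.head.asIdeal ℓ.head.isPrime
  let := (f i).toAlgebra
  have : Algebra.IsIntegral R S := ⟨hf i⟩
  exact ℓ.length_le_ringKrullDim_of_isIntegral hi

namespace WittVector

variable {p : ℕ} [Fact p.Prime] {A : Type*} [CommRing A]

local notation "𝕎" => WittVector p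

lemma ghostComponent_zero_apply (x : 𝕎 A) : ghostComponent 0 x = x.coeff 0 := by
  rw [ghostComponent_apply, wittPolynomial_zero, MvPolynomial.aeval_X]

lemma coeff_zero_iterate_frobenius (x : 𝕎 A) (n : ℕ) :
    (frobenius^[n] x).coeff 0 = ghostComponent n x := by
  induction n generalizing x with
  | zero => exact (ghostComponent_zero_apply x).symm
  | succ n ih => rw [iterate_succ_apply, ih, ghostComponent_frobenius]

lemma natCast_mul_verschiebung (k : ℕ) (x : 𝕎 A) :
    (k : 𝕎 A) * verschiebung x = verschiebung ((k : 𝕎 A) * x) := by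
  rw [← nsmul_eq_mul, ← nsmul_eq_mul, map_nsmul]

lemma verschiebung_mul_verschiebung (x y : 𝕎 A) :
    verschiebung x * verschiebung y = p * verschiebung (x * y) := by
  rw [← verschiebung_mul_frobenius, frobenius_verschiebung, natCast_mul_verschiebung]
  ring_nf

lemma exists_verschiebung_eq_of_coeff_zero {x : 𝕎 A} (hx : x.coeff 0 = 0) :
    ∃ u, verschiebung u = x :=
  ⟨_, (eq_iterate_verschiebung (n := 1) fun i hi => by rwa [Nat.lt_one_iff.mp hi]).symm⟩

lemma coeff_p_pow_mul_eq_zero_of_ghostComponent_eq_zero (m : ℕ) {x : 𝕎 A}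
    (hx : ∀ i ≤ m, ghostComponent i x = 0) {j : ℕ} (hj : j ≤ m) :
    ((p : 𝕎 A) ^ m * x).coeff j = 0 := by
  induction m generalizing x j with
  | zero =>
    rw [Nat.le_zero.mp hj, pow_zero, one_mul, ← ghostComponent_zero_apply]
    exact hx 0 le_rfl
  | succ m ih =>
    obtain ⟨u, rfl⟩ := exists_verschiebung_eq_of_coeff_zero (x := x)
      (by rw [← ghostComponent_zero_apply]; exact hx 0 (by omega))
    have hpu : ∀ i ≤ m, ghostComponent i ((p : 𝕎 A) * u) = 0 := fun i hi => by
      rw [map_mul, map_natCast, ← ghostComponent_verschiebung]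
      exact hx (i + 1) (by omega)
    have hshift : (p : 𝕎 A) ^ (m + 1) * verschiebung u =
        verschiebung ((p : 𝕎 A) ^ m * ((p : 𝕎 A) * u)) := by
      rw [← Nat.cast_pow, natCast_mul_verschiebung, Nat.cast_pow, pow_succ, mul_assoc]
    rcases j with _ | j
    · rw [hshift, verschiebung_coeff_zero]
    · rw [hshift, verschiebung_coeff_succ]
      exact ih hpu (j := j) (by omega)

end WittVector

namespace TruncatedWittVector

variable {p : ℕ} {A : Type*} [CommRing A] {n : ℕ}

local notation "𝕎" => WittVector p

variable (p n) in
def ofLast (a : A) : TruncatedWittVector p (n + 1) A :=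
  mk p (Pi.single (Fin.last n) a)

lemma coeff_ofLast (a : A) (i : Fin (n + 1)) :
    (ofLast p n a).coeff i = if i = Fin.last n then a else 0 := by
  rw [ofLast, coeff_mk, Pi.single_apply]

lemma ofLast_injective : Injective (ofLast p n : A → TruncatedWittVector p (n + 1) A) :=
  fun a b h => by simpa [coeff_ofLast] using congr_arg (coeff (Fin.last n)) h

variable [Fact p.Prime]

noncomputable def ghostComponent (i : Fin n) : TruncatedWittVector p n A →+* A :=
  RingHom.liftOfRightInverse (WittVector.truncate n) out truncateFun_out
    ⟨WittVector.ghostComponent i, fun x hx => by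
      rw [WittVector.mem_ker_truncate] at hx
      rw [RingHom.mem_ker, ghostComponent_apply, aeval_wittPolynomial]
      refine Finset.sum_eq_zero fun j hj => ?_
      rw [hx j (by have := Finset.mem_range.mp hj; omega),
        zero_pow (pow_ne_zero _ (Fact.out : p.Prime).ne_zero), mul_zero]⟩

@[simp]
lemma ghostComponent_truncate (i : Fin n) (x : 𝕎 A) :
    ghostComponent i (WittVector.truncate n x) = WittVector.ghostComponent i x :=
  RingHom.liftOfRightInverse_comp_apply _ _ _ _ x

lemma ghostComponent_truncate_teichmuller (i : Fin n) (a : A) :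
    ghostComponent i (WittVector.truncate n (teichmuller p a)) = a ^ p ^ (i : ℕ) := by
  rw [ghostComponent_truncate, ghostComponent_teichmuller]

lemma ghostComponent_zero_truncate_teichmuller (a : A) :
    ghostComponent (0 : Fin (n + 1)) (WittVector.truncate (n + 1) (teichmuller p a)) = a := by
  rw [ghostComponent_truncate_teichmuller, Fin.val_zero, pow_zero, pow_one]

lemma ghostComponent_isIntegral (i : Fin n) :
    (ghostComponent i : TruncatedWittVector p n A →+* A).IsIntegral := by
  intro a
  have hmonic := Polynomial.monic_X_pow_sub_C (R := TruncatedWittVector p n A)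
    (WittVector.truncate n (teichmuller p a)) (pow_ne_zero (i : ℕ) (Fact.out : p.Prime).ne_zero)
  refine ⟨_, hmonic, ?_⟩
  rw [Polynomial.eval₂_sub, Polynomial.eval₂_X_pow, Polynomial.eval₂_C,
    ghostComponent_truncate_teichmuller, sub_self]

lemma p_pow_mul_eq_zero_of_ghostComponent_eq_zero {x : TruncatedWittVector p (n + 1) A}
    (hx : ∀ i, ghostComponent i x = 0) : (p : TruncatedWittVector p (n + 1) A) ^ n * x = 0 := by
  obtain ⟨y, rfl⟩ := WittVector.truncate_surjective (p := p) (R := A) (n + 1) x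
  rw [← map_natCast (WittVector.truncate (n + 1)), ← map_pow, ← map_mul, ← RingHom.mem_ker,
    WittVector.mem_ker_truncate]
  refine fun j hj => coeff_p_pow_mul_eq_zero_of_ghostComponent_eq_zero n (fun i hi => ?_) (by omega)
  simpa using hx ⟨i, by omega⟩

lemma exists_mul_self_eq_p_mul_of_ghostComponent_zero {x : TruncatedWittVector p (n + 1) A}
    (hx : ghostComponent 0 x = 0) : ∃ z, x * x = p * z := by
  obtain ⟨y, rfl⟩ := WittVector.truncate_surjective (p := p) (R := A) (n + 1) x
  rw [ghostComponent_truncate, Fin.val_zero, ghostComponent_zero_apply] at hx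
  obtain ⟨u, rfl⟩ := exists_verschiebung_eq_of_coeff_zero hx
  refine ⟨WittVector.truncate (n + 1) (verschiebung (u * u)), ?_⟩
  rw [← map_mul, verschiebung_mul_verschiebung, map_mul, map_natCast]

lemma exists_ker_ghostComponent_le (P : Ideal (TruncatedWittVector p (n + 1) A))
    [hP : P.IsPrime] : ∃ i, RingHom.ker (ghostComponent i) ≤ P := by
  suffices Finset.univ.inf (fun i => RingHom.ker (ghostComponent i)) ≤ P by
    simpa using hP.inf_le'.mp this
  intro x hx
  have hgh : ∀ i, ghostComponent i x = 0 := by simpa using hx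
  by_cases hp : (p : TruncatedWittVector p (n + 1) A) ∈ P
  · obtain ⟨z, hz⟩ := exists_mul_self_eq_p_mul_of_ghostComponent_zero (hgh 0)
    exact hP.mem_of_pow_mem 2 (by rw [sq, hz]; exact P.mul_mem_right z hp)
  · have h0 : (p : TruncatedWittVector p (n + 1) A) ^ n * x ∈ P := by
      rw [p_pow_mul_eq_zero_of_ghostComponent_eq_zero hgh]
      exact P.zero_mem
    exact (hP.mem_or_mem h0).resolve_left fun h => hp (hP.mem_of_pow_mem n h)

lemma ringKrullDim_eq : ringKrullDim (TruncatedWittVector p (n + 1) A) = ringKrullDim A :=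
  le_antisymm
    (ringKrullDim_le_of_forall_ker_le ghostComponent ghostComponent_isIntegral
      fun P _ => exists_ker_ghostComponent_le P)
    (ringKrullDim_le_of_surjective _
      fun a => ⟨_, ghostComponent_zero_truncate_teichmuller (p := p) a⟩)

lemma truncate_iterate_verschiebung (x : 𝕎 A) :
    WittVector.truncate (n + 1) (verschiebung^[n] x) = ofLast p n (x.coeff 0) := by
  ext i
  rw [WittVector.coeff_truncate, coeff_ofLast]
  split_ifs with hi
  · simpa [hi] using iterate_verschiebung_coeff x n 0
  · exact iterate_verschiebung_coeff_eq_zero x (Fin.val_lt_last hi)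

lemma ofLast_add (a b : A) : ofLast p n (a + b) = ofLast p n a + ofLast p n b := by
  calc ofLast p n (a + b)
      = WittVector.truncate (n + 1) (verschiebung^[n] (teichmuller p a + teichmuller p b)) := by
        rw [truncate_iterate_verschiebung, add_coeff_zero, teichmuller_coeff_zero,
          teichmuller_coeff_zero]
    _ = ofLast p n a + ofLast p n b := by
        rw [iterate_map_add, map_add, truncate_iterate_verschiebung, truncate_iterate_verschiebung,
          teichmuller_coeff_zero, teichmuller_coeff_zero]

lemma mul_ofLast (r : TruncatedWittVector p (n + 1) A) (a : A) :
    r * ofLast p n a = ofLast p n (ghostComponent (Fin.last n) r * a) := by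
  obtain ⟨x, rfl⟩ := WittVector.truncate_surjective (p := p) (R := A) (n + 1) r
  rw [← teichmuller_coeff_zero p a, ← truncate_iterate_verschiebung, ← map_mul, mul_comm,
    iterate_verschiebung_mul_left, truncate_iterate_verschiebung, mul_coeff_zero,
    coeff_zero_iterate_frobenius, ghostComponent_truncate, Fin.val_last, mul_comm]

lemma truncate_eq_zero_iff_mem_range_ofLast (x : TruncatedWittVector p (n + 1) A) :
    truncate n.le_succ x = 0 ↔ x ∈ Set.range (ofLast p n) := by
  constructor
  · refine fun hx => ⟨x.coeff (Fin.last n), ext fun i => ?_⟩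
    rw [coeff_ofLast]
    split_ifs with hi
    · rw [hi]
    · rw [show i = Fin.castLE n.le_succ (i.castPred hi) from Fin.ext rfl,
        ← TruncatedWittVector.coeff_truncate, hx, coeff_zero]
  · rintro ⟨a, rfl⟩
    ext i
    rw [TruncatedWittVector.coeff_truncate, coeff_ofLast, coeff_zero]
    exact if_neg (Fin.castSucc_lt_last i).ne

theorem isWeaklyRegular_teichmuller {rs : List A} (h : IsWeaklyRegular A rs) (n : ℕ) :
    IsWeaklyRegular (TruncatedWittVector p n A)
      (rs.map fun a => WittVector.truncate n (teichmuller p a)) := by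
  induction n with
  | zero =>
    have : Subsingleton (TruncatedWittVector p 0 A) := ⟨fun x y => ext fun i => i.elim0⟩
    exact isWeaklyRegular_of_subsingleton _ _
  | succ n ih =>
    let := (ghostComponent (Fin.last n) : TruncatedWittVector p (n + 1) A →+* A).toAlgebra
    let := (truncate n.le_succ : TruncatedWittVector p (n + 1) A →+* _).toAlgebra
    -- `0 → A → W_{n+1}(A) → Wₙ(A) → 0`, where `[a]` acts on `A` as `a ^ pⁿ`
    let g : A →ₗ[TruncatedWittVector p (n + 1) A] TruncatedWittVector p (n + 1) A :=
      { toFun := ofLast p n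
        map_add' := ofLast_add
        map_smul' := fun r a => (mul_ofLast r a).symm }
    let f := Algebra.linearMap (TruncatedWittVector p (n + 1) A) (TruncatedWittVector p n A)
    refine isWeaklyRegular_of_exact _ (g := g) (f := f) ofLast_injective
      (truncate_surjective n.le_succ) truncate_eq_zero_iff_mem_range_ofLast ?_ ?_
    · rw [← isWeaklyRegular_map_algebraMap_iff A, List.map_map]
      convert h.map_pow (p ^ n) using 2
      funext a
      exact ghostComponent_truncate_teichmuller (Fin.last n) a
    · rw [← isWeaklyRegular_map_algebraMap_iff (TruncatedWittVector p n A), List.map_map]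
      convert ih using 2
      funext a
      exact truncate_wittVector_truncate (p := p) (R := A) n.le_succ _

end TruncatedWittVector

theorem witt_of_cohen_macaulay_general (p : ℕ) [Fact p.Prime] (n : ℕ)
    (A : Type) [CommRing A]
    (hCM : IsCohenMacaulayLocalRing A) :
    IsCohenMacaulayLocalRing (TruncatedWittVector p (n + 1) A) := by
  obtain ⟨rs, hnon, hreg, hlen⟩ := hCM
  let w₀ : TruncatedWittVector p (n + 1) A →+* A := TruncatedWittVector.ghostComponent 0
  have hw₀ (a : A) : w₀ (WittVector.truncate (n + 1) (teichmuller p a)) = a :=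
    TruncatedWittVector.ghostComponent_zero_truncate_teichmuller a
  refine ⟨rs.map fun a => WittVector.truncate (n + 1) (teichmuller p a), ?_, ?_, ?_⟩
  · simp only [List.forall_mem_map]
    exact fun a ha hu => hnon a ha (hw₀ a ▸ hu.map w₀)
  · refine (TruncatedWittVector.isWeaklyRegular_teichmuller hreg.toIsWeaklyRegular (n + 1)
      ).isRegular_of_isRegular_map w₀ ?_
    rwa [List.map_map, show w₀ ∘ _ = id from funext hw₀, List.map_id]
  · rw [List.length_map, hlen, TruncatedWittVector.ringKrullDim_eq]

/-- Let `A` be a local ring with `p` in its maximal ideal, such that both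
`A` and `W_n(A)` are noetherian. If `A` is Cohen–Macaulay, then `W_n(A)` is Cohen–Macaulay.
(Normalized indexing: `W_n = TruncatedWittVector p (n+1)`; `W_n(A)` is local with maximal
ideal `gh_0⁻¹(𝔪_A)`.) -/
theorem witt_of_cohen_macaulay (p : ℕ) [Fact p.Prime] (n : ℕ)
    (A : Type) [CommRing A] [IsLocalRing A] [IsNoetherianRing A]
    (hp : (p : A) ∈ IsLocalRing.maximalIdeal A)
    [IsNoetherianRing (TruncatedWittVector p (n + 1) A)]
    (hCM : IsCohenMacaulayLocalRing A) :
    IsCohenMacaulayLocalRing (TruncatedWittVector p (n + 1) A) :=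
  witt_of_cohen_macaulay_general p n A hCM
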